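/- A normed vector space that is uniformly uniquely geodesic (with modulus Φ < 1) has characteristic of convexity ε₀ < 2; that is, there exists ε < 2 with δ(ε) > 0. -/

import Mathlib

/-!
Apply the geodesic condition with `z = 0`, `r₁ = 1` and `r₂ = 1 - φ`, where `φ = Φ (1/2) 1`:
whenever `‖x‖, ‖y‖ ≤ 1` and `‖x - y‖ ≥ 2 - φ`, some point `p` of `[x, y]` has `‖p‖ < 1/2`.
Since `x + y - p` lies on `[x, y]` as well, `‖x + y‖ ≤ ‖p‖ + 1 < 3/2`, so `δ(ε) ≥ 1/4` for every
`ε ∈ [2 - φ, 2]`, and hence `ε₀ ≤ 2 - φ < 2`.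
-/

open Metric Set

/-- The modulus of convexity of a normed space. -/
noncomputable def modConv (X : Type*) [NormedAddCommGroup X] (ε : ℝ) : ℝ :=
  sInf {t : ℝ | ∃ x y : X, ‖x‖ ≤ 1 ∧ ‖y‖ ≤ 1 ∧ ε ≤ ‖x - y‖ ∧ t = 1 - ‖x + y‖ / 2}

/-- The characteristic of convexity of a normed space. -/
noncomputable def charConv (X : Type*) [NormedAddCommGroup X] : ℝ :=
  sSup {ε : ℝ | ε ∈ Set.Icc 0 2 ∧ modConv X ε = 0}

theorem add_sub_mem_segment {𝕜 E : Type*} [CommRing 𝕜] [PartialOrder 𝕜] [AddCommGroup E]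
    [Module 𝕜 E] {x y p : E} (hp : p ∈ segment 𝕜 x y) : x + y - p ∈ segment 𝕜 x y := by
  obtain ⟨a, b, ha, hb, hab, rfl⟩ := hp
  refine ⟨b, a, hb, ha, by rwa [add_comm], ?_⟩
  linear_combination (norm := module) hab • x + hab • y

section NormedSpace

variable {E : Type*} [NormedAddCommGroup E] [NormedSpace ℝ E]

theorem norm_add_le_norm_add_of_mem_segment {x y p : E} {R : ℝ} (hx : ‖x‖ ≤ R) (hy : ‖y‖ ≤ R)
    (hp : p ∈ segment ℝ x y) : ‖x + y‖ ≤ ‖p‖ + R := by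
  have hball : x + y - p ∈ closedBall (0 : E) R :=
    (convex_closedBall 0 R).segment_subset (mem_closedBall_zero_iff.2 hx)
      (mem_closedBall_zero_iff.2 hy) (add_sub_mem_segment hp)
  calc ‖x + y‖ = ‖p + (x + y - p)‖ := by rw [add_sub_cancel]
    _ ≤ ‖p‖ + ‖x + y - p‖ := norm_add_le _ _
    _ ≤ ‖p‖ + R := by gcongr; exact mem_closedBall_zero_iff.1 hball

theorem norm_add_lt_of_infDist_zero_segment_lt {x y : E} {r R : ℝ} (hx : ‖x‖ ≤ R)
    (hy : ‖y‖ ≤ R) (h : infDist 0 (segment ℝ x y) < r) : ‖x + y‖ < r + R := by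
  obtain ⟨p, hp, hdist⟩ := (infDist_lt_iff ⟨x, left_mem_segment ℝ x y⟩).1 h
  rw [dist_zero_left] at hdist
  linarith [norm_add_le_norm_add_of_mem_segment hx hy hp]

theorem le_modConv [Nontrivial E] {ε c : ℝ} (hε : ε ≤ 2)
    (h : ∀ x y : E, ‖x‖ ≤ 1 → ‖y‖ ≤ 1 → ε ≤ ‖x - y‖ → c ≤ 1 - ‖x + y‖ / 2) :
    c ≤ modConv E ε := by
  obtain ⟨u, hu⟩ := exists_norm_eq E zero_le_one
  refine le_csInf ⟨_, u, -u, hu.le, by rw [norm_neg, hu], ?_, rfl⟩ ?_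
  · rwa [sub_neg_eq_add, ← two_smul ℝ, norm_smul, hu, Real.norm_two, mul_one]
  · rintro t ⟨x, y, hx, hy, hxy, rfl⟩
    exact h x y hx hy hxy

end NormedSpace

theorem charConv_le {X : Type*} [NormedAddCommGroup X] {η : ℝ} (hη : 0 ≤ η)
    (h : ∀ ε, η < ε → ε ≤ 2 → 0 < modConv X ε) : charConv X ≤ η := by
  refine Real.sSup_le ?_ hη
  rintro ε ⟨⟨-, hε2⟩, hδ⟩
  by_contra! hlt
  exact (h ε hlt hε2).ne' hδ

/-- A normed space which is uniformly uniquely geodesic (with modulus `Φ < 1`) has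
characteristic of convexity `ε₀ < 2`; that is, there exists `ε < 2` with `δ(ε) > 0`. -/
theorem uniformlyUniquelyGeodesic_charConv_lt_two {X : Type*} [NormedAddCommGroup X]
    [NormedSpace ℝ X] [Nontrivial X] (Φ : ℝ → ℝ → ℝ)
    (hΦpos : ∀ ε > (0:ℝ), ∀ b > (0:ℝ), 0 < Φ ε b)
    (hΦlt : ∀ ε > (0:ℝ), ∀ b > (0:ℝ), Φ ε b < 1)
    (hΦ : ∀ ε > (0:ℝ), ∀ b > (0:ℝ), ∀ x y z : X,
      ∀ r₁ ∈ Set.Ioc (0:ℝ) b, ∀ r₂ ∈ Set.Ioc (0:ℝ) b,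
        dist z x ≤ r₁ → dist z y ≤ r₂ + Φ ε b → r₁ + r₂ ≤ dist x y →
          Metric.infDist z (segment ℝ x y) < ε) :
    charConv X < 2 ∧ ∃ ε : ℝ, ε < 2 ∧ 0 < modConv X ε := by
  set φ := Φ (1 / 2) 1
  have hφ0 : 0 < φ := hΦpos _ one_half_pos _ one_pos
  have hφ1 : φ < 1 := hΦlt _ one_half_pos _ one_pos
  have hδ : ∀ ε, 2 - φ ≤ ε → ε ≤ 2 → 1 / 4 ≤ modConv X ε := by
    refine fun ε hε hε2 => le_modConv hε2 fun x y hx hy hxy => ?_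
    have hnear := hΦ _ one_half_pos _ one_pos x y 0 1 ⟨one_pos, le_rfl⟩ (1 - φ)
      ⟨by linarith, by linarith⟩ (by rwa [dist_zero_left]) (by rw [dist_zero_left]; linarith)
      (by rw [dist_eq_norm]; linarith)
    linarith [norm_add_lt_of_infDist_zero_segment_lt hx hy hnear]
  have hchar : charConv X ≤ 2 - φ :=
    charConv_le (by linarith) fun ε hε hε2 => by linarith [hδ ε hε.le hε2]
  exact ⟨by linarith, 2 - φ, by linarith, by linarith [hδ (2 - φ) le_rfl (by linarith)]⟩
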